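/- Let Γ be a countable icc group and μ a probability measure on Γ whose support generates Γ. Let ζ : Γ → ℝ be non-negative, summable (ζ ∈ ℓ¹(Γ)), harmonic for the conjugation action (ζ(g) = Σ_s μ(s) ζ(s g s⁻¹) for all g), and satisfy ζ(e) = 0. Then ζ is identically zero. -/

import Mathlib

/-!
Since `ζ` is summable and not identically zero, it attains its maximum `M > 0`, and the level set
`A = {g | ζ g = M}` is finite. Harmonicity writes `M = ζ g` for `g ∈ A` as a `μ`-average of values
`≤ M`, so conjugation by every element of the support of `μ` maps `A` into `A`. A finite set mapped
into itself is mapped onto itself, hence `A` is invariant under the group generated by the support,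
which is all of `Γ`. Thus `A` contains the conjugacy class of each of its elements; by the icc
property `A ⊆ {1}`, contradicting `ζ 1 = 0 < M`.
-/

open Filter Topology Pointwise

theorem Filter.Tendsto.finite_setOf_le_of_lt {α β : Type*} [LinearOrder β] [TopologicalSpace β]
    [OrderTopology β] {f : α → β} {b c : β} (hf : Tendsto f cofinite (𝓝 b)) (hc : b < c) :
    {x | c ≤ f x}.Finite := by
  simpa only [not_lt] using eventually_cofinite.mp (hf.eventually (eventually_lt_nhds hc))

theorem Filter.Tendsto.exists_forall_ge_of_lt {α β : Type*} [LinearOrder β] [TopologicalSpace β]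
    [OrderTopology β] {f : α → β} {b : β} (hf : Tendsto f cofinite (𝓝 b)) {a : α}
    (ha : b < f a) : ∃ m, ∀ x, f x ≤ f m := by
  obtain ⟨m, hm, hmax⟩ := Set.exists_max_image _ f (hf.finite_setOf_le_of_lt ha) ⟨a, le_rfl⟩
  refine ⟨m, fun x => ?_⟩
  by_cases hx : f a ≤ f x
  · exact hmax x hx
  · exact (not_le.mp hx).le.trans hm

theorem eq_of_hasSum_mul_eq_of_le {ι : Type*} {μ f : ι → ℝ} {M : ℝ} (hμ : ∀ i, 0 ≤ μ i)
    (hμ1 : HasSum μ 1) (hf : ∀ i, f i ≤ M) (hsum : HasSum (fun i => μ i * f i) M) {i : ι}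
    (hi : μ i ≠ 0) : f i = M := by
  have hgap : HasSum (fun j => μ j * (M - f j)) 0 := by
    simpa only [mul_sub, one_mul, sub_self] using (hμ1.mul_right M).sub hsum
  have hzero := congrFun
    ((hasSum_zero_iff_of_nonneg fun j => mul_nonneg (hμ j) (sub_nonneg.2 (hf j))).1 hgap) i
  exact (sub_eq_zero.1 ((mul_eq_zero.1 hzero).resolve_left hi)).symm

theorem Set.Finite.mem_stabilizer_of_smul_set_subset {G α : Type*} [Group G] [MulAction G α]
    {A : Set α} (hA : A.Finite) {g : G} (h : g • A ⊆ A) : g ∈ MulAction.stabilizer G A :=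
  Set.eq_of_subset_of_ncard_le h (Set.ncard_smul_set g A).ge hA

section Conjugation

variable {Γ : Type*} [Group Γ]

theorem Set.Finite.conj_mem_of_closure_eq_top {S : Set Γ} (hS : Subgroup.closure S = ⊤)
    {A : Set Γ} (hA : A.Finite) (h : ∀ s ∈ S, ∀ g ∈ A, s * g * s⁻¹ ∈ A) (c : Γ) :
    ∀ g ∈ A, c * g * c⁻¹ ∈ A := by
  let stab : Subgroup Γ := (MulAction.stabilizer (MulAut Γ) A).comap MulAut.conj
  have hS_le : Subgroup.closure S ≤ stab := by
    refine (Subgroup.closure_le stab).2 fun s hs => hA.mem_stabilizer_of_smul_set_subset ?_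
    rintro _ ⟨g, hg, rfl⟩
    exact h s hs g hg
  have hc : MulAut.conj c • A = A := hS_le (hS ▸ Subgroup.mem_top c)
  intro g hg
  rw [← hc]
  exact ⟨g, hg, rfl⟩

theorem Set.Finite.subset_one_of_conj_mem
    (hicc : ∀ g : Γ, g ≠ 1 → {h : Γ | IsConj g h}.Infinite) {A : Set Γ} (hA : A.Finite)
    (h : ∀ c : Γ, ∀ g ∈ A, c * g * c⁻¹ ∈ A) : A ⊆ {1} := by
  intro g hg
  by_contra hg1
  refine hicc g hg1 (hA.subset fun x hx => ?_)
  obtain ⟨c, rfl⟩ := isConj_iff.mp hx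
  exact h c g hg

end Conjugation

theorem stmt_6_general {Γ : Type*} [Group Γ]
    (hicc : ∀ g : Γ, g ≠ 1 → {h : Γ | IsConj g h}.Infinite)
    (μ : Γ → ℝ)
    (hμnonneg : ∀ s, 0 ≤ μ s) (hμprob : HasSum μ 1)
    (hgen : Subgroup.closure {s | μ s ≠ 0} = ⊤)
    (ζ : Γ → ℝ) (hζnonneg : ∀ g, 0 ≤ ζ g) (hζsum : Summable ζ)
    (hharm : ∀ g : Γ, HasSum (fun s => μ s * ζ (s * g * s⁻¹)) (ζ g))
    (hζe : ζ 1 = 0) :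
    ζ = 0 := by
  by_contra hne
  obtain ⟨g₀, hg₀⟩ := Function.ne_iff.mp hne
  have hpos : 0 < ζ g₀ := (hζnonneg g₀).lt_of_ne' hg₀
  obtain ⟨m, hmax⟩ := hζsum.tendsto_cofinite_zero.exists_forall_ge_of_lt hpos
  have hA : {g | ζ g = ζ m}.Finite :=
    (hζsum.tendsto_cofinite_zero.finite_setOf_le_of_lt (hpos.trans_le (hmax g₀))).subset
      fun g hg => hg.ge
  have hinv : ∀ s ∈ {s | μ s ≠ 0}, ∀ g ∈ {g | ζ g = ζ m}, s * g * s⁻¹ ∈ {g | ζ g = ζ m} :=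
    fun s hs g hg => eq_of_hasSum_mul_eq_of_le hμnonneg hμprob
      (fun t => hmax (t * g * t⁻¹)) (hg ▸ hharm g) hs
  have hm1 : m = 1 :=
    hA.subset_one_of_conj_mem hicc (hA.conj_mem_of_closure_eq_top hgen hinv) rfl
  exact (hpos.trans_le (hmax g₀)).ne' (hm1 ▸ hζe)

theorem stmt_6 {Γ : Type*} [Group Γ] [Countable Γ]
    (hicc : ∀ g : Γ, g ≠ 1 → {h : Γ | IsConj g h}.Infinite)
    (μ : Γ → ℝ)
    (hμnonneg : ∀ s, 0 ≤ μ s) (hμprob : HasSum μ 1)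
    (hgen : Subgroup.closure {s | μ s ≠ 0} = ⊤)
    (ζ : Γ → ℝ) (hζnonneg : ∀ g, 0 ≤ ζ g) (hζsum : Summable ζ)
    (hharm : ∀ g : Γ, HasSum (fun s => μ s * ζ (s * g * s⁻¹)) (ζ g))
    (hζe : ζ 1 = 0) :
    ζ = 0 :=
  stmt_6_general hicc μ hμnonneg hμprob hgen ζ hζnonneg hζsum hharm hζe
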